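/- arXiv:math/0508213 — 2 statements merged into one kernel-verified Lean document; each statement's English description precedes it below -/
import Mathlib

section
/- Fix z = u + iv ∈ ℂ with v ≠ 0 and N ≥ 1, and let f : ℝⁿ → ℂ (n = N(N+1)/2) be defined by f(x) := N⁻¹ tr((A(x) − zI)⁻¹), where A(x) is the N×N real symmetric matrix with (i,j) entry N^{-1/2} x_{ij} for i ≤ j. Then λ₂(f) ≤ 4 max{|v|⁻⁴, |v|⁻³} N⁻² and λ₃(f) ≤ 12 max{|v|⁻⁶, |v|⁻⁴} N^{-5/2}. -/
open MeasureTheory ProbabilityTheory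

/-- The Wigner matrix map: `A(x)` has `(a,b)` entry `N^{-1/2} x_{ab}` for `a ≤ b`
and `N^{-1/2} x_{ba}` for `a > b` (viewed as a complex matrix). -/
noncomputable def wignerMatrix (N : ℕ) (x : Fin N × Fin N → ℝ) :
    Matrix (Fin N) (Fin N) ℂ :=
  fun a b => ((Real.sqrt N)⁻¹ * (if a ≤ b then x (a, b) else x (b, a)) : ℝ)

/-- The resolventW `G(x) = (A(x) - zI)⁻¹`. -/
noncomputable def resolventW (N : ℕ) (z : ℂ) (x : Fin N × Fin N → ℝ) :
    Matrix (Fin N) (Fin N) ℂ :=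
  (wignerMatrix N x - z • (1 : Matrix (Fin N) (Fin N) ℂ))⁻¹

/-- The Stieltjes transform `f(x) = N⁻¹ tr((A(x) - zI)⁻¹)`. -/
noncomputable def stieltjes (N : ℕ) (z : ℂ) (x : Fin N × Fin N → ℝ) : ℂ :=
  (N : ℂ)⁻¹ * Matrix.trace (resolventW N z x)

/-- `∂A/∂x_{ij}`: the matrix with `N^{-1/2}` in positions `(i,j)` and `(j,i)`,
and `0` elsewhere. -/
noncomputable def dA (N : ℕ) (i j : Fin N) : Matrix (Fin N) (Fin N) ℂ :=
  fun a b => if (a, b) = (i, j) ∨ (a, b) = (j, i) then ((Real.sqrt N)⁻¹ : ℝ) else 0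

/-- The `p`-fold partial derivative in the coordinate `q` of a complex-valued
function of the variables `(x_{ij})`. -/
noncomputable def pderivC (N : ℕ) (f : (Fin N × Fin N → ℝ) → ℂ)
    (q : Fin N × Fin N) (p : ℕ) (x : Fin N × Fin N → ℝ) : ℂ :=
  iteratedDeriv p (fun t => f (Function.update x q t)) (x q)

/-- The set whose supremum is `λ_r(f)` for a complex-valued function of the
variables `(x_{ij})_{i ≤ j}` (all of `ℝⁿ` as the domain). -/
def lamSetC (N : ℕ) (f : (Fin N × Fin N → ℝ) → ℂ) (r : ℕ) : Set ℝ :=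
  { y | ∃ (q : Fin N × Fin N) (p : ℕ) (x : Fin N × Fin N → ℝ),
      q.1 ≤ q.2 ∧ 1 ≤ p ∧ p ≤ r ∧
      y = ‖pderivC N f q p x‖ ^ ((r : ℝ) / (p : ℝ)) }

noncomputable def lamC (N : ℕ) (f : (Fin N × Fin N → ℝ) → ℂ) (r : ℕ) : ℝ :=
  sSup (lamSetC N f r)

/-!
Along the coordinate `x_q` the matrix `A(x) - zI` moves on an affine line `a + tB` with
`B = ∂A/∂x_q`, so `∂_q^p f = N⁻¹ (-1)^p p! tr((GB)^p G)` with `G = (A(x) - zI)⁻¹`.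
Self-adjointness of `A(x)` gives `‖G‖ ≤ |Im z|⁻¹` in the operator norm, `B` is `N^{-1/2}` times
a partial permutation matrix, and `|tr(BQ)| ≤ 2 N^{-1/2} ‖Q‖` since `B` has two nonzero entries.
Together `|∂_q^p f| ≤ 2 p! N^{-(p+2)/2} |Im z|^{-(p+1)}`, and the bounds on `λ₂`, `λ₃` are
arithmetic consequences.
-/

open scoped Nat Matrix.Norms.L2Operator

section AffineResolvent

variable {𝕜 𝔸 F : Type*} [NontriviallyNormedField 𝕜] [NormedRing 𝔸] [NormedAlgebra 𝕜 𝔸]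
  [CompleteSpace 𝔸] [NormedAddCommGroup F] [NormedSpace 𝕜 F] {a b : 𝔸}

theorem hasDerivAt_ringInverse_add_smul {t : 𝕜} (ht : IsUnit (a + t • b)) :
    HasDerivAt (fun s : 𝕜 => Ring.inverse (a + s • b))
      (-(Ring.inverse (a + t • b) * b * Ring.inverse (a + t • b))) t := by
  obtain ⟨u, hu⟩ := ht
  have hline : HasDerivAt (fun s : 𝕜 => a + s • b) b t := by
    simpa using ((hasDerivAt_id t).smul_const b).const_add a
  have := (hasFDerivAt_ringInverse (𝕜 := 𝕜) u).comp_hasDerivAt_of_eq t hline hu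
  simpa [Function.comp_def, ← hu, Ring.inverse_unit, mul_assoc] using this

theorem hasDerivAt_ringInverse_add_smul_mul_pow_mul {t : 𝕜} (ht : IsUnit (a + t • b)) (p : ℕ) :
    HasDerivAt (fun s : 𝕜 => (Ring.inverse (a + s • b) * b) ^ p * Ring.inverse (a + s • b))
      (-((p + 1 : ℕ) : 𝕜) •
        ((Ring.inverse (a + t • b) * b) ^ (p + 1) * Ring.inverse (a + t • b))) t := by
  have hR := hasDerivAt_ringInverse_add_smul ht
  induction p with
  | zero => simpa [mul_assoc] using hR
  | succ p ih =>
    have hprod := (hR.mul_const b).mul ih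
    convert hprod using 1
    · ext s
      simp [pow_succ', mul_assoc]
    simp only [pow_succ', mul_assoc, mul_smul_comm, neg_mul]
    push_cast
    module

theorem iteratedDeriv_comp_ringInverse_add_smul (L : 𝔸 →L[𝕜] F)
    (hU : ∀ s : 𝕜, IsUnit (a + s • b)) (p : ℕ) :
    iteratedDeriv p (fun s : 𝕜 => L (Ring.inverse (a + s • b))) = fun t =>
      ((-1) ^ p * (p ! : 𝕜)) •
        L ((Ring.inverse (a + t • b) * b) ^ p * Ring.inverse (a + t • b)) := by
  induction p with
  | zero => simp
  | succ p ih =>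
    ext t
    rw [iteratedDeriv_succ, ih]
    refine ((L.hasFDerivAt.comp_hasDerivAt t
      (hasDerivAt_ringInverse_add_smul_mul_pow_mul (hU t) p)).const_smul _).deriv.trans ?_
    simp only [map_smul, smul_smul, Nat.factorial_succ]
    push_cast
    ring_nf

end AffineResolvent

namespace Matrix

variable {𝕜 m n : Type*} [RCLike 𝕜] [Fintype m] [Fintype n] [DecidableEq n]

theorem norm_entry_le_l2_opNorm (A : Matrix m n 𝕜) (i : m) (j : n) : ‖A i j‖ ≤ ‖A‖ := by
  set v := (EuclideanSpace.equiv m 𝕜).symm (A *ᵥ (EuclideanSpace.single j (1 : 𝕜)))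
  calc ‖A i j‖ = ‖v i‖ := by simp [v]
    _ ≤ ‖v‖ := PiLp.norm_apply_le _ _
    _ ≤ ‖A‖ * ‖EuclideanSpace.single j (1 : 𝕜)‖ := A.l2_opNorm_mulVec _
    _ = ‖A‖ := by simp

theorem norm_trace_mul_le (A Q : Matrix n n 𝕜) :
    ‖trace (A * Q)‖ ≤ (∑ a, ∑ b, ‖A a b‖) * ‖Q‖ := by
  calc ‖trace (A * Q)‖ = ‖∑ a, ∑ b, A a b * Q b a‖ := by simp [trace, mul_apply]
    _ ≤ ∑ a, ∑ b, ‖A a b‖ * ‖Q b a‖ := by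
        refine (norm_sum_le _ _).trans (Finset.sum_le_sum fun a _ => ?_)
        exact (norm_sum_le _ _).trans_eq (by simp)
    _ ≤ ∑ a, ∑ b, ‖A a b‖ * ‖Q‖ := by
        gcongr with a _ b _
        exact norm_entry_le_l2_opNorm Q b a
    _ = (∑ a, ∑ b, ‖A a b‖) * ‖Q‖ := by simp [Finset.sum_mul]

end Matrix

theorem LinearMap.IsSymmetric.abs_im_mul_norm_le {E : Type*} [NormedAddCommGroup E]
    [InnerProductSpace ℂ E] {T : E →ₗ[ℂ] E} (hT : T.IsSymmetric) (z : ℂ) (w : E) :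
    |z.im| * ‖w‖ ≤ ‖T w - z • w‖ := by
  have him : (inner ℂ w (T w - z • w)).im = -(z.im * ‖w‖ ^ 2) := by
    simp [inner_self_eq_norm_sq_to_K, ← Complex.ofReal_pow]
    exact hT.im_inner_self_apply w
  have hcs : |z.im| * ‖w‖ ^ 2 ≤ ‖w‖ * ‖T w - z • w‖ := by
    calc |z.im| * ‖w‖ ^ 2 = |(inner ℂ w (T w - z • w)).im| := by
          rw [him, abs_neg, abs_mul, abs_of_nonneg (sq_nonneg ‖w‖)]
      _ ≤ ‖w‖ * ‖T w - z • w‖ := (Complex.abs_im_le_norm _).trans (norm_inner_le_norm _ _)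
  rcases (norm_nonneg w).eq_or_lt with hw | hw
  · simp [← hw]
  · nlinarith

namespace Matrix.IsHermitian

variable {n : Type*} [Fintype n] [DecidableEq n] {H : Matrix n n ℂ}

theorem abs_im_mul_norm_le (hH : H.IsHermitian) (z : ℂ) (w : EuclideanSpace ℂ n) :
    |z.im| * ‖w‖ ≤ ‖toEuclideanCLM (𝕜 := ℂ) (H - z • 1) w‖ := by
  have := (isSymmetric_toEuclideanLin_iff.mpr hH).abs_im_mul_norm_le z w
  simpa [← coe_toEuclideanCLM_eq_toEuclideanLin] using this

theorem isUnit_sub_smul_one (hH : H.IsHermitian) {z : ℂ} (hz : z.im ≠ 0) :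
    IsUnit (H - z • 1) := by
  refine mulVec_injective_iff_isUnit.mp fun v v' hvv' => ?_
  have h := hH.abs_im_mul_norm_le z (WithLp.toLp 2 (v - v'))
  rw [toEuclideanCLM_toLp, mulVec_sub, hvv', sub_self, WithLp.toLp_zero, norm_zero] at h
  have : ‖(WithLp.toLp 2 (v - v') : EuclideanSpace ℂ n)‖ = 0 := by
    have := abs_pos.mpr hz
    nlinarith [norm_nonneg (WithLp.toLp 2 (v - v') : EuclideanSpace ℂ n)]
  simpa [sub_eq_zero] using this

theorem norm_inv_sub_smul_one_le (hH : H.IsHermitian) {z : ℂ} (hz : z.im ≠ 0) :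
    ‖(H - z • 1)⁻¹‖ ≤ |z.im|⁻¹ := by
  rw [cstar_norm_def]
  refine ContinuousLinearMap.opNorm_le_bound _ (by positivity) fun w => ?_
  have hinv :
      toEuclideanCLM (𝕜 := ℂ) (H - z • 1) (toEuclideanCLM (𝕜 := ℂ) (H - z • 1)⁻¹ w) = w := by
    rw [← mul_apply_eq_comp, ← map_mul,
      mul_nonsing_inv _ ((isUnit_iff_isUnit_det _).mp (hH.isUnit_sub_smul_one hz)), map_one,
      one_apply_eq_self]
  have h := hH.abs_im_mul_norm_le z (toEuclideanCLM (𝕜 := ℂ) (H - z • 1)⁻¹ w)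
  rw [hinv] at h
  rw [inv_mul_eq_div, le_div_iff₀' (abs_pos.mpr hz)]
  exact h

end Matrix.IsHermitian

theorem norm_pow_mul_le {R : Type*} [SeminormedRing R] (a b : R) (k : ℕ) :
    ‖a ^ k * b‖ ≤ ‖a‖ ^ k * ‖b‖ := by
  induction k with
  | zero => simp
  | succ k ih =>
    rw [pow_succ', mul_assoc, pow_succ', mul_assoc]
    exact (norm_mul_le _ _).trans (by gcongr)

section Wigner

open Matrix

variable {N : ℕ}

theorem wignerMatrix_isHermitian (x : Fin N × Fin N → ℝ) : (wignerMatrix N x).IsHermitian := by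
  ext a b
  rcases lt_trichotomy a b with h | rfl | h
  · simp [wignerMatrix, h.le, not_le.mpr h]
  · simp [wignerMatrix]
  · simp [wignerMatrix, h.le, not_le.mpr h]

theorem wignerMatrix_update {q : Fin N × Fin N} (hq : q.1 ≤ q.2) (x : Fin N × Fin N → ℝ)
    (t : ℝ) :
    wignerMatrix N (Function.update x q t) = wignerMatrix N x + (t - x q) • dA N q.1 q.2 := by
  obtain ⟨i, j⟩ := q
  ext a b
  simp only [wignerMatrix, dA, Matrix.add_apply, Matrix.smul_apply, Function.update_apply,
    Prod.mk.injEq, Complex.real_smul]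
  split_ifs <;> push_cast <;> grind

theorem dA_eq_smul_diagonal_mul_permMatrix (i j : Fin N) :
    dA N i j = (((Real.sqrt N)⁻¹ : ℝ) : ℂ) •
      (diagonal (fun a => if a = i ∨ a = j then 1 else 0) * (Equiv.swap i j).permMatrix ℂ) := by
  ext a b
  simp only [dA, Matrix.smul_apply, diagonal_mul, PEquiv.toMatrix_apply, Equiv.toPEquiv_apply,
    Option.mem_def, Option.some.injEq, Prod.mk.injEq, smul_eq_mul, Equiv.swap_apply_def]
  split_ifs <;> grind

theorem norm_dA_le (i j : Fin N) : ‖dA N i j‖ ≤ (Real.sqrt N)⁻¹ := by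
  rw [dA_eq_smul_diagonal_mul_permMatrix]
  refine (norm_smul_le _ _).trans ?_
  rw [Complex.norm_real, Real.norm_of_nonneg (by positivity)]
  refine mul_le_of_le_one_right (by positivity) ((norm_mul_le _ _).trans ?_)
  refine mul_le_one₀ ?_ (norm_nonneg _) (permMatrix_l2_opNorm_le _)
  rw [l2_opNorm_diagonal]
  refine (pi_norm_le_iff_of_nonneg zero_le_one).mpr fun a => ?_
  split_ifs <;> simp

theorem sum_norm_dA_le (i j : Fin N) :
    ∑ a, ∑ b, ‖dA N i j a b‖ ≤ 2 * (Real.sqrt N)⁻¹ := by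
  calc ∑ a, ∑ b, ‖dA N i j a b‖
      ≤ ∑ a, ∑ b, ((if a = i ∧ b = j then (Real.sqrt N)⁻¹ else 0) +
          (if a = j ∧ b = i then (Real.sqrt N)⁻¹ else 0)) := by
        have hs : 0 ≤ (Real.sqrt N)⁻¹ := by positivity
        gcongr with a _ b _
        simp only [dA, Prod.mk.injEq]
        split_ifs <;> simp only [norm_zero, Complex.norm_real, Real.norm_of_nonneg hs] <;>
          first | linarith | tauto
    _ = 2 * (Real.sqrt N)⁻¹ := by
        simp only [Finset.sum_add_distrib, ite_and, Finset.sum_ite_irrel, Finset.sum_ite_eq',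
          Finset.mem_univ, if_true, Finset.sum_const_zero]
        ring

theorem norm_trace_dA_mul_le (i j : Fin N) (Q : Matrix (Fin N) (Fin N) ℂ) :
    ‖trace (dA N i j * Q)‖ ≤ 2 * (Real.sqrt N)⁻¹ * ‖Q‖ :=
  (norm_trace_mul_le _ _).trans (by gcongr; exact sum_norm_dA_le i j)

theorem pderivC_stieltjes {z : ℂ} (hz : z.im ≠ 0) {q : Fin N × Fin N} (hq : q.1 ≤ q.2) (p : ℕ)
    (x : Fin N × Fin N → ℝ) :
    pderivC N (stieltjes N z) q p x = (N : ℂ)⁻¹ * (((-1) ^ p * (p ! : ℝ)) •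
      trace ((resolventW N z x * dA N q.1 q.2) ^ p * resolventW N z x)) := by
  set B := dA N q.1 q.2
  set a := wignerMatrix N x - z • 1 - x q • B
  have hline : ∀ t : ℝ, wignerMatrix N (Function.update x q t) - z • 1 = a + t • B := by
    intro t
    rw [wignerMatrix_update hq, sub_smul]
    simp only [a, B]
    abel
  have hG : ∀ t : ℝ, resolventW N z (Function.update x q t) = Ring.inverse (a + t • B) := by
    intro t
    rw [resolventW, hline, nonsing_inv_eq_ringInverse]
  have hU : ∀ t : ℝ, IsUnit (a + t • B) := fun t =>
    hline t ▸ (wignerMatrix_isHermitian _).isUnit_sub_smul_one hz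
  let L : Matrix (Fin N) (Fin N) ℂ →L[ℝ] ℂ :=
    LinearMap.toContinuousLinearMap ((traceLinearMap _ ℂ ℂ).restrictScalars ℝ)
  have hf : (fun t => stieltjes N z (Function.update x q t)) =
      fun t => (N : ℂ)⁻¹ * L (Ring.inverse (a + t • B)) := by
    ext t
    simp [stieltjes, hG, L]
  rw [pderivC, hf, iteratedDeriv_const_mul_field, iteratedDeriv_comp_ringInverse_add_smul L hU]
  dsimp only
  rw [← hG, Function.update_eq_self]
  rfl

theorem norm_pderivC_stieltjes_le {z : ℂ} (hz : z.im ≠ 0) {q : Fin N × Fin N} (hq : q.1 ≤ q.2)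
    {p : ℕ} (hp : 1 ≤ p) (x : Fin N × Fin N → ℝ) :
    ‖pderivC N (stieltjes N z) q p x‖ ≤
      2 * p ! * (Real.sqrt N)⁻¹ ^ (p + 2) * |z.im|⁻¹ ^ (p + 1) := by
  obtain ⟨k, rfl⟩ := Nat.exists_eq_add_of_le' hp
  set G := resolventW N z x
  set B := dA N q.1 q.2
  have hG : ‖G‖ ≤ |z.im|⁻¹ := (wignerMatrix_isHermitian x).norm_inv_sub_smul_one_le hz
  have hB : ‖B‖ ≤ (Real.sqrt N)⁻¹ := norm_dA_le _ _
  have hcyc : trace ((G * B) ^ (k + 1) * G) = trace (B * ((G * B) ^ k * G * G)) := by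
    rw [pow_succ', mul_assoc, mul_assoc, trace_mul_comm, mul_assoc, mul_assoc]
  have hN : ((N : ℝ))⁻¹ = (Real.sqrt N)⁻¹ ^ 2 := by
    rw [inv_pow, Real.sq_sqrt (Nat.cast_nonneg N)]
  rw [pderivC_stieltjes hz hq, hcyc]
  calc ‖(N : ℂ)⁻¹ * (((-1) ^ (k + 1) * ((k + 1) ! : ℝ)) • trace (B * ((G * B) ^ k * G * G)))‖
      = (N : ℝ)⁻¹ * (k + 1) ! * ‖trace (B * ((G * B) ^ k * G * G))‖ := by
        simp [mul_assoc]
    _ ≤ (N : ℝ)⁻¹ * (k + 1) ! * (2 * (Real.sqrt N)⁻¹ * ((‖G‖ * ‖B‖) ^ k * ‖G‖ * ‖G‖)) := by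
        gcongr
        refine (norm_trace_dA_mul_le _ _ _).trans ?_
        gcongr
        refine (norm_mul_le _ _).trans ?_
        gcongr
        exact (norm_pow_mul_le _ _ _).trans (by gcongr; exact norm_mul_le _ _)
    _ ≤ (N : ℝ)⁻¹ * (k + 1) ! * (2 * (Real.sqrt N)⁻¹ *
          ((|z.im|⁻¹ * (Real.sqrt N)⁻¹) ^ k * |z.im|⁻¹ * |z.im|⁻¹)) := by
        gcongr
    _ = 2 * (k + 1) ! * (Real.sqrt N)⁻¹ ^ (k + 1 + 2) * |z.im|⁻¹ ^ (k + 1 + 1) := by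
        rw [hN]
        ring

end Wigner

theorem lamC_le_of_forall {N r : ℕ} {f : (Fin N × Fin N → ℝ) → ℂ} {C : ℝ} (hC : 0 ≤ C)
    (h : ∀ q : Fin N × Fin N, q.1 ≤ q.2 → ∀ p, 1 ≤ p → p ≤ r → ∀ x,
      ‖pderivC N f q p x‖ ^ ((r : ℝ) / p) ≤ C) :
    lamC N f r ≤ C :=
  Real.sSup_le (by rintro _ ⟨q, p, x, hq, hp, hpr, rfl⟩; exact h q hq p hp hpr x) hC

theorem rpow_three_halves_le_of_pow_le_sq {y C : ℝ} (hy : 0 ≤ y) (hC : 0 ≤ C) (h : y ^ 3 ≤ C ^ 2) :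
    y ^ ((3 : ℝ) / 2) ≤ C := by
  rw [← pow_le_pow_iff_left₀ (Real.rpow_nonneg hy _) hC two_ne_zero, ← Real.rpow_mul_natCast hy]
  norm_num
  exact_mod_cast h

section

variable {s w y : ℝ} {p : ℕ}

theorem rpow_two_div_le_of_le_deriv_bound (hs0 : 0 ≤ s) (hs1 : s ≤ 1) (hy : 0 ≤ y)
    (hp : 1 ≤ p) (hp2 : p ≤ 2) (hyp : y ≤ 2 * p ! * s ^ (p + 2) * w ^ (p + 1)) :
    y ^ ((2 : ℝ) / p) ≤ 4 * max (w ^ 4) (w ^ 3) * s ^ 4 := by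
  interval_cases p
  · rw [show (2 : ℝ) / (1 : ℕ) = (2 : ℕ) by norm_num, Real.rpow_natCast]
    calc y ^ 2 ≤ (2 * s ^ 3 * w ^ 2) ^ 2 := by gcongr; simpa using hyp
      _ = 4 * w ^ 4 * s ^ 6 := by ring
      _ ≤ 4 * max (w ^ 4) (w ^ 3) * s ^ 4 := by
          gcongr 4 * ?_ * ?_
          · exact le_max_left _ _
          · exact pow_le_pow_of_le_one hs0 hs1 (by norm_num)
  · rw [show (2 : ℝ) / (2 : ℕ) = 1 by norm_num, Real.rpow_one]
    calc y ≤ 4 * w ^ 3 * s ^ 4 := by norm_num [Nat.factorial] at hyp; linarith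
      _ ≤ 4 * max (w ^ 4) (w ^ 3) * s ^ 4 := by gcongr; exact le_max_right _ _

theorem rpow_three_div_le_of_le_deriv_bound (hs0 : 0 ≤ s) (hs1 : s ≤ 1) (hw : 0 ≤ w)
    (hy : 0 ≤ y) (hp : 1 ≤ p) (hp3 : p ≤ 3) (hyp : y ≤ 2 * p ! * s ^ (p + 2) * w ^ (p + 1)) :
    y ^ ((3 : ℝ) / p) ≤ 12 * max (w ^ 6) (w ^ 4) * s ^ 5 := by
  interval_cases p
  · rw [show (3 : ℝ) / (1 : ℕ) = (3 : ℕ) by norm_num, Real.rpow_natCast]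
    calc y ^ 3 ≤ (2 * s ^ 3 * w ^ 2) ^ 3 := by gcongr; simpa using hyp
      _ = 8 * w ^ 6 * s ^ 9 := by ring
      _ ≤ 12 * max (w ^ 6) (w ^ 4) * s ^ 5 := by
          gcongr ?_ * ?_ * ?_
          · norm_num
          · exact le_max_left _ _
          · exact pow_le_pow_of_le_one hs0 hs1 (by norm_num)
  · have hw9 : w ^ 9 ≤ max (w ^ 6) (w ^ 4) ^ 2 := by
      rcases le_total w 1 with hw1 | hw1
      · calc w ^ 9 ≤ (w ^ 4) ^ 2 := by
              rw [← pow_mul]; exact pow_le_pow_of_le_one hw hw1 (by norm_num)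
          _ ≤ _ := by gcongr; exact le_max_right _ _
      · calc w ^ 9 ≤ (w ^ 6) ^ 2 := by
              rw [← pow_mul]; exact pow_le_pow_right₀ hw1 (by norm_num)
          _ ≤ _ := by gcongr; exact le_max_left _ _
    refine rpow_three_halves_le_of_pow_le_sq hy (by positivity) ?_
    norm_num [Nat.factorial] at hyp
    calc y ^ 3 ≤ (4 * s ^ 4 * w ^ 3) ^ 3 := by gcongr
      _ = 64 * w ^ 9 * s ^ 12 := by ring
      _ ≤ 144 * max (w ^ 6) (w ^ 4) ^ 2 * s ^ 10 := by
          gcongr ?_ * ?_ * ?_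
          · norm_num
          · exact pow_le_pow_of_le_one hs0 hs1 (by norm_num)
      _ = (12 * max (w ^ 6) (w ^ 4) * s ^ 5) ^ 2 := by ring
  · rw [show (3 : ℝ) / (3 : ℕ) = 1 by norm_num, Real.rpow_one]
    calc y ≤ 12 * w ^ 4 * s ^ 5 := by norm_num [Nat.factorial] at hyp; linarith
      _ ≤ 12 * max (w ^ 6) (w ^ 4) * s ^ 5 := by gcongr; exact le_max_right _ _

end

theorem stmt10
    {N : ℕ} (hN : 1 ≤ N) (z : ℂ) (hz : z.im ≠ 0) :
    lamC N (stieltjes N z) 2 ≤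
      4 * max ((|z.im| ^ 4)⁻¹) ((|z.im| ^ 3)⁻¹) * ((N : ℝ) ^ 2)⁻¹ ∧
    lamC N (stieltjes N z) 3 ≤
      12 * max ((|z.im| ^ 6)⁻¹) ((|z.im| ^ 4)⁻¹) * ((N : ℝ) ^ ((5 : ℝ) / 2))⁻¹ := by
  have hs0 : 0 ≤ (Real.sqrt N)⁻¹ := by positivity
  have hs1 : (Real.sqrt N)⁻¹ ≤ 1 :=
    inv_le_one_of_one_le₀ (Real.one_le_sqrt.mpr (by exact_mod_cast hN))
  have hw : 0 ≤ |z.im|⁻¹ := by positivity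
  have hN2 : ((N : ℝ) ^ 2)⁻¹ = (Real.sqrt N)⁻¹ ^ 4 := by
    rw [inv_pow, show 4 = 2 * 2 by rfl, pow_mul, Real.sq_sqrt (Nat.cast_nonneg N)]
  have hN52 : ((N : ℝ) ^ ((5 : ℝ) / 2))⁻¹ = (Real.sqrt N)⁻¹ ^ 5 := by
    rw [inv_pow, Real.sqrt_eq_rpow, ← Real.rpow_mul_natCast (Nat.cast_nonneg N)]
    norm_num
  simp only [← inv_pow, hN2, hN52]
  exact ⟨lamC_le_of_forall (by positivity) fun q hq p hp hp2 x =>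
      rpow_two_div_le_of_le_deriv_bound hs0 hs1 (norm_nonneg _) hp hp2
        (norm_pderivC_stieltjes_le hz hq hp x),
    lamC_le_of_forall (by positivity) fun q hq p hp hp3 x =>
      rpow_three_div_le_of_le_deriv_bound hs0 hs1 hw (norm_nonneg _) hp hp3
        (norm_pderivC_stieltjes_le hz hq hp x)⟩
end

section
/- Fix β > 0, h ∈ ℝ and N ≥ 2, and let F(x) := N⁻¹ log Σ_{σ∈{−1,1}^N} exp( β N^{-1/2} Σ_{i<j} x_{ij} σᵢσⱼ + β h Σ_{i≤N} σᵢ ). Let 𝒥 and 𝒥′ be collections of independent real random variables (𝒥_{ij})_{1≤i<j≤N}, (𝒥′_{ij})_{1≤i<j≤N}, independent of each other, with zero means, unit variances, and third absolute moments uniformly bounded by γ < ∞. Then for every thrice differentiable g : ℝ → ℝ with bounded first three derivatives, |E g(F(𝒥)) − E g(F(𝒥′))| ≤ 26 C₂(g) β³ γ N^{-1/2}, i.e. the free energies differ by at most a constant (depending on g, β, γ) times N^{-1/2}. -/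
open MeasureTheory ProbabilityTheory

/-- `N ⬝ f_σ(x) = β N^{-1/2} Σ_{i<j} x_{ij} σ_i σ_j + β h Σ_i σ_i`, where the
spin configuration `σ ∈ {-1,1}^N` is encoded by `s : Fin N → Bool`. -/
noncomputable def skEnergy (N : ℕ) (β h : ℝ) (x : Fin N × Fin N → ℝ)
    (s : Fin N → Bool) : ℝ :=
  β * (Real.sqrt N)⁻¹ *
      ∑ q ∈ Finset.univ.filter (fun q : Fin N × Fin N => q.1 < q.2),
        x q * (if s q.1 then (1 : ℝ) else -1) * (if s q.2 then (1 : ℝ) else -1) +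
    β * h * ∑ i, (if s i then (1 : ℝ) else -1)

/-- The free energy `F(x) = N⁻¹ log Σ_σ exp(β N^{-1/2} Σ_{i<j} x_{ij} σ_i σ_j
+ β h Σ_i σ_i)` of the S-K model. -/
noncomputable def skFreeEnergy (N : ℕ) (β h : ℝ) (x : Fin N × Fin N → ℝ) : ℝ :=
  (N : ℝ)⁻¹ * Real.log (∑ s : Fin N → Bool, Real.exp (skEnergy N β h x s))

/-- The `p`-fold partial derivative in the coordinate `q` of a function of the
coupling variables `(x_{ij})`. -/
noncomputable def pderivSK (N : ℕ) (f : (Fin N × Fin N → ℝ) → ℝ)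
    (q : Fin N × Fin N) (p : ℕ) (x : Fin N × Fin N → ℝ) : ℝ :=
  iteratedDeriv p (fun t => f (Function.update x q t)) (x q)

/-- The set whose supremum is `λ_r(f)`, the coordinates being the pairs
`(i,j)` with `i < j`, with all of `ℝⁿ` as the domain. -/
def lamSetSK (N : ℕ) (f : (Fin N × Fin N → ℝ) → ℝ) (r : ℕ) : Set ℝ :=
  { y | ∃ (q : Fin N × Fin N) (p : ℕ) (x : Fin N × Fin N → ℝ),
      q.1 < q.2 ∧ 1 ≤ p ∧ p ≤ r ∧
      y = |pderivSK N f q p x| ^ ((r : ℝ) / (p : ℝ)) }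

noncomputable def lamSK (N : ℕ) (f : (Fin N × Fin N → ℝ) → ℝ) (r : ℕ) : ℝ :=
  sSup (lamSetSK N f r)

/-!
Lindeberg's replacement argument, in Chatterjee's form. Swap the couplings `J q` for `J' q`
one pair at a time. Along the coordinate `q`, expand `t ↦ g (F x)` (with `x q = t`) to second
order at `t = 0`: its coefficients depend only on the other couplings, hence are independent of
`J q` and `J' q`, whose first two moments agree, so the expansions have the same expectation and
each swap costs at most `sup |∂_q³ (g ∘ F)| · (E|J q|³ + E|J' q|³)`.

`F` is `N⁻¹` times the log-partition function of a linear exponential family on `{-1,1}^N`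
with statistics `ε_q(σ) = β N^{-1/2} σ_i σ_j`, so `∂_q F = N⁻¹ ⟨ε_q⟩` and
`∂_q ⟨ε_q⟩ = ⟨ε_q²⟩ - ⟨ε_q⟩² = β² / N - ⟨ε_q⟩²`. Since `|⟨ε_q⟩| ≤ β N^{-1/2}`, this gives
`|∂_q³ (g ∘ F)| ≤ (2 B₁ + 3 B₂ + B₃) β³ N^{-5/2}`, and there are fewer than `N²` pairs.
-/

open Function Set Filter Topology

lemma abs_sub_le_of_hasDerivAt_of_abs_le {f f' : ℝ → ℝ} {K t : ℝ}
    (hf : ∀ u, HasDerivAt f (f' u) u) (hK : ∀ u ∈ uIcc 0 t, |f' u| ≤ K) :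
    |f t - f 0| ≤ K * |t| := by
  simpa using convex_uIcc (0 : ℝ) t |>.norm_image_sub_le_of_norm_hasDerivWithin_le
    (fun u _ => (hf u).hasDerivWithinAt) hK left_mem_uIcc right_mem_uIcc

lemma abs_le_of_mem_uIcc_zero {u t : ℝ} (hu : u ∈ uIcc 0 t) : |u| ≤ |t| := by
  simpa using abs_sub_left_of_mem_uIcc hu

/-- The mean value theorem applied three times; this loses the factor `1 / 6` of the sharp
bound, which the final constant can afford. -/
lemma abs_taylor_two_le {f f₁ f₂ f₃ : ℝ → ℝ} {M : ℝ}
    (hf : ∀ u, HasDerivAt f (f₁ u) u) (hf₁ : ∀ u, HasDerivAt f₁ (f₂ u) u)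
    (hf₂ : ∀ u, HasDerivAt f₂ (f₃ u) u) (hM : ∀ u, |f₃ u| ≤ M) (t : ℝ) :
    |f t - f 0 - f₁ 0 * t - f₂ 0 * t ^ 2 / 2| ≤ M * |t| ^ 3 := by
  have hM₀ : 0 ≤ M := (abs_nonneg _).trans (hM 0)
  have h₂ : ∀ u ∈ uIcc 0 t, |f₂ u - f₂ 0| ≤ M * |t| := fun u hu =>
    (abs_sub_le_of_hasDerivAt_of_abs_le hf₂ fun v _ => hM v).trans
      (mul_le_mul_of_nonneg_left (abs_le_of_mem_uIcc_zero hu) hM₀)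
  have h₁ : ∀ u ∈ uIcc 0 t, |f₁ u - f₁ 0 - f₂ 0 * u| ≤ M * |t| ^ 2 := by
    intro u hu
    have hd : ∀ v, HasDerivAt (fun w => f₁ w - f₂ 0 * w) (f₂ v - f₂ 0) v := fun v => by
      simpa using (hf₁ v).fun_sub ((hasDerivAt_id' v).const_mul (f₂ 0))
    have := abs_sub_le_of_hasDerivAt_of_abs_le hd fun v hv => h₂ v (uIcc_subset_uIcc_left hu hv)
    calc |f₁ u - f₁ 0 - f₂ 0 * u| ≤ M * |t| * |u| := by
          convert this using 2; ring
      _ ≤ M * |t| * |t| := by gcongr ?_ * ?_; exact abs_le_of_mem_uIcc_zero hu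
      _ = M * |t| ^ 2 := by ring
  have hd : ∀ v, HasDerivAt (fun w => f w - f₁ 0 * w - f₂ 0 * w ^ 2 / 2)
      (f₁ v - f₁ 0 - f₂ 0 * v) v := fun v =>
    ((hf v).fun_sub ((hasDerivAt_id' v).const_mul (f₁ 0))).fun_sub
      (((hasDerivAt_pow 2 v).const_mul (f₂ 0)).div_const 2) |>.congr_deriv (by ring)
  have := abs_sub_le_of_hasDerivAt_of_abs_le hd h₁
  calc |f t - f 0 - f₁ 0 * t - f₂ 0 * t ^ 2 / 2| ≤ M * |t| ^ 2 * |t| := by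
        convert this using 2; ring
    _ = M * |t| ^ 3 := by ring

lemma hasDerivAt_iteratedDeriv {g : ℝ → ℝ} {n p : ℕ}
    (hg : ∀ p < n, Differentiable ℝ (iteratedDeriv p g)) (hp : p < n) (y : ℝ) :
    HasDerivAt (iteratedDeriv p g) (iteratedDeriv (p + 1) g y) y := by
  rw [iteratedDeriv_succ]
  exact (hg p hp y).hasDerivAt

section PartialDeriv

variable {ι : Type*} [DecidableEq ι]

def HasPartialDeriv (i : ι) (Φ D : (ι → ℝ) → ℝ) : Prop :=
  ∀ x, HasDerivAt (fun t => Φ (update x i t)) (D x) (x i)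

variable {i : ι} {Φ Ψ D E : (ι → ℝ) → ℝ}

lemma HasPartialDeriv.hasDerivAt (h : HasPartialDeriv i Φ D) (x : ι → ℝ) (t : ℝ) :
    HasDerivAt (fun s => Φ (update x i s)) (D (update x i t)) t := by
  simpa using h (update x i t)

lemma HasPartialDeriv.congr_deriv (h : HasPartialDeriv i Φ D) (hDE : ∀ x, D x = E x) :
    HasPartialDeriv i Φ E :=
  fun x => (h x).congr_deriv (hDE x)

lemma HasPartialDeriv.comp {g g' : ℝ → ℝ} (hg : ∀ y, HasDerivAt g (g' y) y)
    (h : HasPartialDeriv i Φ D) :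
    HasPartialDeriv i (fun x => g (Φ x)) (fun x => g' (Φ x) * D x) := fun x => by
  have := (hg _).comp (x i) (h x)
  rwa [update_eq_self] at this

lemma HasPartialDeriv.add (hΦ : HasPartialDeriv i Φ D) (hΨ : HasPartialDeriv i Ψ E) :
    HasPartialDeriv i (fun x => Φ x + Ψ x) (fun x => D x + E x) :=
  fun x => (hΦ x).fun_add (hΨ x)

lemma HasPartialDeriv.const_mul (c : ℝ) (h : HasPartialDeriv i Φ D) :
    HasPartialDeriv i (fun x => c * Φ x) (fun x => c * D x) :=
  fun x => (h x).const_mul c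

lemma HasPartialDeriv.mul (hΦ : HasPartialDeriv i Φ D) (hΨ : HasPartialDeriv i Ψ E) :
    HasPartialDeriv i (fun x => Φ x * Ψ x) (fun x => D x * Ψ x + Φ x * E x) :=
  fun x => by simpa using (hΦ x).fun_mul (hΨ x)

lemma HasPartialDeriv.pow (h : HasPartialDeriv i Φ D) (n : ℕ) :
    HasPartialDeriv i (fun x => Φ x ^ n) (fun x => n * Φ x ^ (n - 1) * D x) :=
  fun x => by simpa using (h x).fun_pow n

lemma HasPartialDeriv.div (hΦ : HasPartialDeriv i Φ D) (hΨ : HasPartialDeriv i Ψ E)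
    (hΨ₀ : ∀ x, Ψ x ≠ 0) :
    HasPartialDeriv i (fun x => Φ x / Ψ x) (fun x => (D x * Ψ x - Φ x * E x) / Ψ x ^ 2) :=
  fun x => by simpa using (hΦ x).fun_div (hΨ x) (by simpa using hΨ₀ x)

lemma HasPartialDeriv.abs_sub_le {C : ℝ} (h : HasPartialDeriv i Φ D) (hC : ∀ x, |D x| ≤ C)
    (x : ι → ℝ) (s t : ℝ) : |Φ (update x i s) - Φ (update x i t)| ≤ C * |s - t| := by
  simpa using abs_sub_le_of_hasDerivAt_of_abs_le (t := s - t)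
    (fun u => (h.hasDerivAt x (u + t)).comp_add_const u t) fun u _ => hC _

/-- `D x` is the limit of the difference quotients `n * (Φ (x + e_i / n) - Φ x)`. -/
lemma HasPartialDeriv.measurable (h : HasPartialDeriv i Φ D) (hΦ : Measurable Φ) :
    Measurable D := by
  have hslope : ∀ x, Tendsto (fun n : ℕ => (n : ℝ) * (Φ (update x i (x i + (n : ℝ)⁻¹)) - Φ x))
      atTop (𝓝 (D x)) := fun x => by
    simpa [comp_def] using (h x).tendsto_slope_zero_right.comp
      (tendsto_inv_atTop_nhdsGT_zero.comp tendsto_natCast_atTop_atTop)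
  refine measurable_of_tendsto_metrizable (fun n => ?_) (tendsto_pi_nhds.2 hslope)
  fun_prop

variable {F F₁ F₂ F₃ : (ι → ℝ) → ℝ} {g₁ g₂ g₃ : ℝ → ℝ}

lemma HasPartialDeriv.comp_second (hg₁ : ∀ y, HasDerivAt g₁ (g₂ y) y)
    (hF : HasPartialDeriv i F F₁) (hF₁ : HasPartialDeriv i F₁ F₂) :
    HasPartialDeriv i (fun x => g₁ (F x) * F₁ x)
      (fun x => g₂ (F x) * F₁ x ^ 2 + g₁ (F x) * F₂ x) :=
  ((hF.comp hg₁).mul hF₁).congr_deriv fun x => by ring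

lemma HasPartialDeriv.comp_third (hg₁ : ∀ y, HasDerivAt g₁ (g₂ y) y)
    (hg₂ : ∀ y, HasDerivAt g₂ (g₃ y) y) (hF : HasPartialDeriv i F F₁)
    (hF₁ : HasPartialDeriv i F₁ F₂) (hF₂ : HasPartialDeriv i F₂ F₃) :
    HasPartialDeriv i (fun x => g₂ (F x) * F₁ x ^ 2 + g₁ (F x) * F₂ x)
      (fun x => g₃ (F x) * F₁ x ^ 3 + 3 * g₂ (F x) * F₁ x * F₂ x + g₁ (F x) * F₃ x) :=
  (((hF.comp hg₂).mul (hF₁.pow 2)).add ((hF.comp hg₁).mul hF₂)).congr_deriv fun x => by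
    push_cast; ring

end PartialDeriv

lemma abs_sub_empty_le_sum {α : Type*} [DecidableEq α] (T : Finset α → ℝ) (d : α → ℝ)
    (h : ∀ s a, a ∉ s → |T (insert a s) - T s| ≤ d a) (s : Finset α) :
    |T s - T ∅| ≤ ∑ a ∈ s, d a := by
  induction s using Finset.induction_on with
  | empty => simp
  | insert a s ha ih =>
    rw [Finset.sum_insert ha]
    exact (abs_sub_le _ (T s) _).trans (add_le_add (h s a ha) ih)

lemma abs_sub_le_sum_of_hasPartialDeriv {ι : Type*} [Fintype ι] [DecidableEq ι]
    {Φ : (ι → ℝ) → ℝ} {D : ι → (ι → ℝ) → ℝ} {C : ℝ}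
    (hD : ∀ i, HasPartialDeriv i Φ (D i)) (hC : ∀ i x, |D i x| ≤ C) (x y : ι → ℝ) :
    |Φ x - Φ y| ≤ C * ∑ i, |x i - y i| := by
  have := abs_sub_empty_le_sum (fun s => Φ (s.piecewise x y)) (fun i => C * |x i - y i|)
    (fun s a ha => by
      have hy : update (s.piecewise x y) a (y a) = s.piecewise x y :=
        update_eq_self_iff.2 (Finset.piecewise_eq_of_notMem _ _ _ ha).symm
      simpa [Finset.piecewise_insert, hy] using
        (hD a).abs_sub_le (hC a) (s.piecewise x y) (x a) (y a))
    Finset.univ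
  simpa [Finset.mul_sum] using this

section Probability

variable {Ω : Type*} [MeasurableSpace Ω] {μ : Measure Ω}

lemma ProbabilityTheory.iIndepFun.indepFun_of_measurable_iSup [IsProbabilityMeasure μ]
    {κ ι : Type*} {W : κ → Ω → ℝ} (hW : iIndepFun W μ) (hWm : ∀ k, Measurable (W k))
    {T : Set κ} {k : κ} (hk : k ∉ T) {U : Ω → ι → ℝ}
    (hU : ∀ j, Measurable[⨆ l ∈ T, MeasurableSpace.comap (W l) inferInstance] fun ω => U ω j) :
    IndepFun U (W k) μ := by
  rw [IndepFun_iff_Indep]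
  have := indep_iSup_of_disjoint (fun j => (hWm j).comap_le) hW
    (Set.disjoint_singleton_right.2 hk)
  refine indep_of_indep_of_le_right (indep_of_indep_of_le_left this
    ((@measurable_pi_iff _ _ _ (⨆ l ∈ T, MeasurableSpace.comap (W l) inferInstance) _ U).2
      hU).comap_le) ?_
  exact le_iSup₂ (f := fun j (_ : j ∈ ({k} : Set κ)) => MeasurableSpace.comap (W j) inferInstance)
    k rfl

lemma ProbabilityTheory.IndepFun.integrable_and_integral_comp_mul [IsProbabilityMeasure μ]
    {E : Type*} [MeasurableSpace E] {U : Ω → E} {Y : Ω → ℝ} {a : E → ℝ}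
    (hUY : IndepFun U Y μ) (ha : Measurable a) (hi : Integrable (fun ω => a (U ω)) μ)
    (hY : Integrable Y μ) :
    Integrable (fun ω => a (U ω) * Y ω) μ ∧
      ∫ ω, a (U ω) * Y ω ∂μ = (∫ ω, a (U ω) ∂μ) * ∫ ω, Y ω ∂μ := by
  have h : IndepFun (fun ω => a (U ω)) Y μ := hUY.comp ha measurable_id
  exact ⟨h.integrable_mul hi hY,
    h.integral_fun_mul_eq_mul_integral hi.aestronglyMeasurable hY.aestronglyMeasurable⟩

/-- The value `φ u 0` cancels, and the first- and second-order terms have equal expectations by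
independence and matching moments, so only the two remainders are left. -/
lemma abs_integral_sub_le_of_taylor [IsProbabilityMeasure μ] {E : Type*} [MeasurableSpace E]
    {U : Ω → E} {Y Y' : Ω → ℝ} {φ : E → ℝ → ℝ} {a₁ a₂ : E → ℝ} {M : ℝ}
    (hUY : IndepFun U Y μ) (hUY' : IndepFun U Y' μ) (ha₁ : Measurable a₁) (ha₂ : Measurable a₂)
    (hi₁ : Integrable (fun ω => a₁ (U ω)) μ) (hi₂ : Integrable (fun ω => a₂ (U ω)) μ)
    (hY : MemLp Y 3 μ) (hY' : MemLp Y' 3 μ)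
    (hmean : ∫ ω, Y ω ∂μ = ∫ ω, Y' ω ∂μ) (hvar : ∫ ω, Y ω ^ 2 ∂μ = ∫ ω, Y' ω ^ 2 ∂μ)
    (hφ : Integrable (fun ω => φ (U ω) (Y ω)) μ) (hφ' : Integrable (fun ω => φ (U ω) (Y' ω)) μ)
    (htaylor : ∀ u t, |φ u t - φ u 0 - a₁ u * t - a₂ u * t ^ 2 / 2| ≤ M * |t| ^ 3) :
    |∫ ω, φ (U ω) (Y ω) ∂μ - ∫ ω, φ (U ω) (Y' ω) ∂μ| ≤
      M * (∫ ω, |Y ω| ^ 3 ∂μ + ∫ ω, |Y' ω| ^ 3 ∂μ) := by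
  have hsq : ∀ {Z : Ω → ℝ}, MemLp Z 3 μ → Integrable (fun ω => Z ω ^ 2) μ := fun hZ =>
    (hZ.mono_exponent (by norm_num)).integrable_sq
  have hcube : ∀ {Z : Ω → ℝ}, MemLp Z 3 μ → Integrable (fun ω => |Z ω| ^ 3) μ := fun hZ => by
    simpa using hZ.integrable_norm_pow' (p := 3)
  have hUY₂ : IndepFun U (fun ω => Y ω ^ 2) μ := hUY.comp measurable_id (measurable_id.pow_const 2)
  have hUY₂' : IndepFun U (fun ω => Y' ω ^ 2) μ :=
    hUY'.comp measurable_id (measurable_id.pow_const 2)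
  obtain ⟨i₁, e₁⟩ := hUY.integrable_and_integral_comp_mul ha₁ hi₁ (hY.integrable (by norm_num))
  obtain ⟨i₁', e₁'⟩ := hUY'.integrable_and_integral_comp_mul ha₁ hi₁ (hY'.integrable (by norm_num))
  obtain ⟨i₂, e₂⟩ := hUY₂.integrable_and_integral_comp_mul ha₂ hi₂ (hsq hY)
  obtain ⟨i₂', e₂'⟩ := hUY₂'.integrable_and_integral_comp_mul ha₂ hi₂ (hsq hY')
  set R : Ω → ℝ := fun ω => φ (U ω) (Y ω) - φ (U ω) (Y' ω) -
    (a₁ (U ω) * Y ω - a₁ (U ω) * Y' ω) - (a₂ (U ω) * Y ω ^ 2 - a₂ (U ω) * Y' ω ^ 2) / 2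
  have hR : ∫ ω, R ω ∂μ = ∫ ω, φ (U ω) (Y ω) ∂μ - ∫ ω, φ (U ω) (Y' ω) ∂μ := by
    rw [integral_sub ((hφ.sub' hφ').sub' (i₁.sub' i₁')) ((i₂.sub' i₂').div_const 2),
      integral_sub (hφ.sub' hφ') (i₁.sub' i₁'), integral_div, integral_sub hφ hφ',
      integral_sub i₁ i₁', integral_sub i₂ i₂', e₁, e₁', e₂, e₂', hmean, hvar]
    ring
  have hR_le : ∀ ω, |R ω| ≤ M * |Y ω| ^ 3 + M * |Y' ω| ^ 3 := fun ω => by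
    have hsplit : R ω = (φ (U ω) (Y ω) - φ (U ω) 0 - a₁ (U ω) * Y ω - a₂ (U ω) * Y ω ^ 2 / 2) -
        (φ (U ω) (Y' ω) - φ (U ω) 0 - a₁ (U ω) * Y' ω - a₂ (U ω) * Y' ω ^ 2 / 2) := by
      simp only [R]; ring
    rw [hsplit]
    exact (abs_sub _ _).trans (add_le_add (htaylor _ _) (htaylor _ _))
  calc |∫ ω, φ (U ω) (Y ω) ∂μ - ∫ ω, φ (U ω) (Y' ω) ∂μ|
      = |∫ ω, R ω ∂μ| := by rw [hR]
    _ ≤ ∫ ω, |R ω| ∂μ := abs_integral_le_integral_abs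
    _ ≤ ∫ ω, (M * |Y ω| ^ 3 + M * |Y' ω| ^ 3) ∂μ :=
      integral_mono_of_nonneg (Eventually.of_forall fun ω => abs_nonneg _)
        (((hcube hY).const_mul M).add ((hcube hY').const_mul M)) (Eventually.of_forall hR_le)
    _ = M * (∫ ω, |Y ω| ^ 3 ∂μ + ∫ ω, |Y' ω| ^ 3 ∂μ) := by
      rw [integral_add ((hcube hY).const_mul M) ((hcube hY').const_mul M), integral_const_mul,
        integral_const_mul, mul_add]

section Lindeberg

variable {ι : Type*} [DecidableEq ι] {X Y : ι → Ω → ℝ}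

lemma measurable_piecewise (hXm : ∀ i, Measurable (X i)) (hYm : ∀ i, Measurable (Y i))
    (S : Finset ι) : Measurable fun ω => S.piecewise (fun j => Y j ω) (fun j => X j ω) :=
  measurable_pi_iff.2 fun j => by by_cases hj : j ∈ S <;> simp [hj, hXm j, hYm j]

/-- Once its coordinate `i` is erased, a mixture of `X` and `Y` is built from the coordinates
`Sum.elim X Y k` with `k ≠ Sum.inl i, Sum.inr i`. -/
lemma indepFun_update_piecewise [IsProbabilityMeasure μ] (hXm : ∀ i, Measurable (X i))
    (hYm : ∀ i, Measurable (Y i)) (hind : iIndepFun (Sum.elim X Y) μ) (S : Finset ι) (i : ι)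
    {k : ι ⊕ ι} (hk : k = Sum.inl i ∨ k = Sum.inr i) :
    IndepFun (fun ω => update (S.piecewise (fun j => Y j ω) (fun j => X j ω)) i 0)
      (Sum.elim X Y k) μ := by
  set W := Sum.elim X Y
  let T : Set (ι ⊕ ι) := {Sum.inl i, Sum.inr i}ᶜ
  have hWT : ∀ l ∈ T, Measurable[⨆ l ∈ T, MeasurableSpace.comap (W l) inferInstance] (W l) :=
    fun l hl => (comap_measurable (W l)).mono
      (le_iSup₂ (f := fun l (_ : l ∈ T) => MeasurableSpace.comap (W l) inferInstance) l hl) le_rfl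
  refine hind.indepFun_of_measurable_iSup (Sum.rec hXm hYm) (T := T)
    (by rcases hk with rfl | rfl <;> simp [T]) fun j => ?_
  by_cases hji : j = i
  · subst hji
    simp
  · by_cases hjS : j ∈ S
    · simpa [hji, hjS, W] using hWT (Sum.inr j) (by simp [T, hji])
    · simpa [hji, hjS, W] using hWT (Sum.inl j) (by simp [T, hji])

variable [Fintype ι] {Φ : (ι → ℝ) → ℝ}

lemma integrable_comp_of_hasPartialDeriv [IsFiniteMeasure μ] {D : ι → (ι → ℝ) → ℝ} {C : ℝ}
    (hΦ : Measurable Φ) (hD : ∀ i, HasPartialDeriv i Φ (D i)) (hC : ∀ i x, |D i x| ≤ C)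
    {V : Ω → ι → ℝ} (hV : Measurable V) (hVi : ∀ i, Integrable (fun ω => V ω i) μ) :
    Integrable (fun ω => Φ (V ω)) μ := by
  refine Integrable.mono' (g := fun ω => |Φ 0| + |C| * ∑ j, |V ω j|)
    ((integrable_const _).add ((integrable_finsetSum _ fun j _ => (hVi j).abs).const_mul _))
    (hΦ.comp hV).aestronglyMeasurable (Eventually.of_forall fun ω => ?_)
  have hlip := abs_sub_le_sum_of_hasPartialDeriv hD hC (V ω) 0
  simp only [Pi.zero_apply, sub_zero] at hlip
  calc ‖Φ (V ω)‖ ≤ |Φ 0| + |Φ (V ω) - Φ 0| := by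
        simpa using abs_add_le (Φ 0) (Φ (V ω) - Φ 0)
    _ ≤ |Φ 0| + |C| * ∑ j, |V ω j| := by
        gcongr
        exact hlip.trans (mul_le_mul_of_nonneg_right (le_abs_self _)
          (Finset.sum_nonneg fun _ _ => abs_nonneg _))

variable [IsProbabilityMeasure μ] {D₁ D₂ D₃ : ι → (ι → ℝ) → ℝ} {C₁ C₂ M : ℝ}

lemma abs_integral_piecewise_insert_sub_le (hΦ : Measurable Φ)
    (hD₁ : ∀ i, HasPartialDeriv i Φ (D₁ i)) (hD₂ : ∀ i, HasPartialDeriv i (D₁ i) (D₂ i))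
    (hD₃ : ∀ i, HasPartialDeriv i (D₂ i) (D₃ i))
    (hC₁ : ∀ i x, |D₁ i x| ≤ C₁) (hC₂ : ∀ i x, |D₂ i x| ≤ C₂) (hM : ∀ i x, |D₃ i x| ≤ M)
    (hXm : ∀ i, Measurable (X i)) (hYm : ∀ i, Measurable (Y i))
    (hind : iIndepFun (Sum.elim X Y) μ) (hX : ∀ i, MemLp (X i) 3 μ) (hY : ∀ i, MemLp (Y i) 3 μ)
    {S : Finset ι} {i : ι} (hi : i ∉ S) (hmean : ∫ ω, X i ω ∂μ = ∫ ω, Y i ω ∂μ)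
    (hvar : ∫ ω, X i ω ^ 2 ∂μ = ∫ ω, Y i ω ^ 2 ∂μ) :
    |∫ ω, Φ ((insert i S).piecewise (fun j => Y j ω) (fun j => X j ω)) ∂μ -
        ∫ ω, Φ (S.piecewise (fun j => Y j ω) (fun j => X j ω)) ∂μ| ≤
      M * (∫ ω, |X i ω| ^ 3 ∂μ + ∫ ω, |Y i ω| ^ 3 ∂μ) := by
  have hZint : ∀ S : Finset ι,
      Integrable (fun ω => Φ (S.piecewise (fun j => Y j ω) (fun j => X j ω))) μ := fun S =>
    integrable_comp_of_hasPartialDeriv hΦ hD₁ hC₁ (measurable_piecewise hXm hYm S) fun j => by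
      by_cases hj : j ∈ S <;> simp [hj, (hX j).integrable, (hY j).integrable]
  set U : Ω → ι → ℝ := fun ω => update (S.piecewise (fun j => Y j ω) (fun j => X j ω)) i 0
  have hUm : Measurable U := measurable_update_left.comp (measurable_piecewise hXm hYm S)
  have hUX : ∀ ω, S.piecewise (fun j => Y j ω) (fun j => X j ω) = update (U ω) i (X i ω) :=
    fun ω => by simp [U, hi]
  have hUY : ∀ ω,
      (insert i S).piecewise (fun j => Y j ω) (fun j => X j ω) = update (U ω) i (Y i ω) :=
    fun ω => by simp [U, Finset.piecewise_insert]
  have ha₁ : Measurable fun u : ι → ℝ => D₁ i (update u i 0) :=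
    ((hD₁ i).measurable hΦ).comp (by fun_prop)
  have ha₂ : Measurable fun u : ι → ℝ => D₂ i (update u i 0) :=
    ((hD₂ i).measurable ((hD₁ i).measurable hΦ)).comp (by fun_prop)
  have hUX_ind : IndepFun U (X i) μ := indepFun_update_piecewise hXm hYm hind S i (.inl rfl)
  have hUY_ind : IndepFun U (Y i) μ := indepFun_update_piecewise hXm hYm hind S i (.inr rfl)
  have key := abs_integral_sub_le_of_taylor (φ := fun u t => Φ (update u i t)) hUY_ind hUX_ind
    ha₁ ha₂
    (Integrable.of_bound (ha₁.comp hUm).aestronglyMeasurable C₁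
      (Eventually.of_forall fun ω => hC₁ i _))
    (Integrable.of_bound (ha₂.comp hUm).aestronglyMeasurable C₂
      (Eventually.of_forall fun ω => hC₂ i _))
    (hY i) (hX i) hmean.symm hvar.symm
    (by simpa only [hUY] using hZint (insert i S)) (by simpa only [hUX] using hZint S)
    (fun u t => abs_taylor_two_le ((hD₁ i).hasDerivAt u) ((hD₂ i).hasDerivAt u)
      ((hD₃ i).hasDerivAt u) (fun s => hM i _) t)
  simp only [hUX, hUY]
  exact key.trans_eq (by ring)

theorem abs_integral_sub_le_lindeberg (hΦ : Measurable Φ)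
    (hD₁ : ∀ i, HasPartialDeriv i Φ (D₁ i)) (hD₂ : ∀ i, HasPartialDeriv i (D₁ i) (D₂ i))
    (hD₃ : ∀ i, HasPartialDeriv i (D₂ i) (D₃ i))
    (hC₁ : ∀ i x, |D₁ i x| ≤ C₁) (hC₂ : ∀ i x, |D₂ i x| ≤ C₂) (hM : ∀ i x, |D₃ i x| ≤ M)
    (hXm : ∀ i, Measurable (X i)) (hYm : ∀ i, Measurable (Y i))
    (hind : iIndepFun (Sum.elim X Y) μ) (hX : ∀ i, MemLp (X i) 3 μ) (hY : ∀ i, MemLp (Y i) 3 μ)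
    (hmean : ∀ i, ∫ ω, X i ω ∂μ = ∫ ω, Y i ω ∂μ)
    (hvar : ∀ i, ∫ ω, X i ω ^ 2 ∂μ = ∫ ω, Y i ω ^ 2 ∂μ) :
    |∫ ω, Φ (fun i => X i ω) ∂μ - ∫ ω, Φ (fun i => Y i ω) ∂μ| ≤
      M * ∑ i, (∫ ω, |X i ω| ^ 3 ∂μ + ∫ ω, |Y i ω| ^ 3 ∂μ) := by
  have := abs_sub_empty_le_sum
    (fun S => ∫ ω, Φ (S.piecewise (fun j => Y j ω) (fun j => X j ω)) ∂μ) _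
    (fun S i hi => abs_integral_piecewise_insert_sub_le hΦ hD₁ hD₂ hD₃ hC₁ hC₂ hM hXm hYm hind
      hX hY hi (hmean i) (hvar i)) Finset.univ
  rw [abs_sub_comm]
  simpa [Finset.mul_sum] using this

end Lindeberg

end Probability

section Gibbs

variable {S ι : Type*} [Fintype ι] [DecidableEq ι] (b : S → ℝ) (ε : ι → S → ℝ)

noncomputable def gibbsWeight (x : ι → ℝ) (s : S) : ℝ := Real.exp (b s + ∑ j, x j * ε j s)

variable {b ε}

omit [DecidableEq ι] in
lemma gibbsWeight_pos (x : ι → ℝ) (s : S) : 0 < gibbsWeight b ε x s := Real.exp_pos _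

lemma hasPartialDeriv_gibbsWeight (i : ι) (s : S) :
    HasPartialDeriv i (fun x => gibbsWeight b ε x s) (fun x => ε i s * gibbsWeight b ε x s) := by
  intro x
  have hlin : HasDerivAt (fun t => b s + ∑ j, update x i t j * ε j s) (ε i s) (x i) := by
    have := HasDerivAt.fun_sum (u := Finset.univ) fun j _ =>
      ((hasDerivAt_pi.1 (hasDerivAt_update x i (x i))) j).mul_const (ε j s)
    simpa [Pi.single_apply] using this.const_add (b s)
  simpa [gibbsWeight, mul_comm] using hlin.exp

variable [Fintype S] (b ε)

noncomputable def partitionFn (x : ι → ℝ) : ℝ := ∑ s, gibbsWeight b ε x s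

noncomputable def gibbsAvg (f : S → ℝ) (x : ι → ℝ) : ℝ :=
  (∑ s, f s * gibbsWeight b ε x s) / partitionFn b ε x

variable {b ε}

lemma hasPartialDeriv_sum_mul_gibbsWeight (i : ι) (f : S → ℝ) :
    HasPartialDeriv i (fun x => ∑ s, f s * gibbsWeight b ε x s)
      (fun x => ∑ s, f s * ε i s * gibbsWeight b ε x s) := fun x => by
  simpa [mul_assoc] using HasDerivAt.fun_sum (u := Finset.univ) fun s _ =>
    (hasPartialDeriv_gibbsWeight i s x).const_mul (f s)

lemma hasPartialDeriv_partitionFn (i : ι) :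
    HasPartialDeriv i (partitionFn b ε) (fun x => ∑ s, ε i s * gibbsWeight b ε x s) := fun x =>
  HasDerivAt.fun_sum fun s _ => hasPartialDeriv_gibbsWeight i s x

variable [Nonempty S]

omit [DecidableEq ι] in
lemma partitionFn_pos (x : ι → ℝ) : 0 < partitionFn b ε x :=
  Finset.sum_pos (fun s _ => gibbsWeight_pos x s) Finset.univ_nonempty

omit [DecidableEq ι] in
lemma abs_gibbsAvg_le {f : S → ℝ} {C : ℝ} (hf : ∀ s, |f s| ≤ C) (x : ι → ℝ) :
    |gibbsAvg b ε f x| ≤ C := by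
  have hZ := partitionFn_pos (b := b) (ε := ε) x
  rw [gibbsAvg, abs_div, abs_of_pos hZ, div_le_iff₀ hZ, partitionFn, Finset.mul_sum]
  refine (Finset.abs_sum_le_sum_abs _ _).trans (Finset.sum_le_sum fun s _ => ?_)
  rw [abs_mul, abs_of_pos (gibbsWeight_pos x s)]
  exact mul_le_mul_of_nonneg_right (hf s) (gibbsWeight_pos x s).le

omit [DecidableEq ι] in
lemma gibbsAvg_const (c : ℝ) (x : ι → ℝ) : gibbsAvg b ε (fun _ => c) x = c := by
  rw [gibbsAvg, ← Finset.mul_sum]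
  exact mul_div_cancel_right₀ c (partitionFn_pos x).ne'

lemma hasPartialDeriv_log_partitionFn (i : ι) :
    HasPartialDeriv i (fun x => Real.log (partitionFn b ε x)) (gibbsAvg b ε (ε i)) := fun x => by
  simpa [gibbsAvg] using (hasPartialDeriv_partitionFn i x).log
    (by simpa using (partitionFn_pos (b := b) (ε := ε) x).ne')

lemma hasPartialDeriv_gibbsAvg (i : ι) (f : S → ℝ) :
    HasPartialDeriv i (gibbsAvg b ε f)
      (fun x => gibbsAvg b ε (fun s => f s * ε i s) x - gibbsAvg b ε f x * gibbsAvg b ε (ε i) x) :=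
  ((hasPartialDeriv_sum_mul_gibbsWeight i f).div (hasPartialDeriv_partitionFn i)
    fun x => (partitionFn_pos x).ne').congr_deriv fun x => by
      have := (partitionFn_pos (b := b) (ε := ε) x).ne'
      simp only [gibbsAvg, partitionFn] at *
      field_simp

/-- For statistics of constant modulus the second moment `⟨ε_i²⟩` is the constant `c ^ 2`. -/
lemma hasPartialDeriv_gibbsAvg_self {i : ι} {c : ℝ} (hε : ∀ s, |ε i s| = c) :
    HasPartialDeriv i (gibbsAvg b ε (ε i)) (fun x => c ^ 2 - gibbsAvg b ε (ε i) x ^ 2) :=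
  (hasPartialDeriv_gibbsAvg i (ε i)).congr_deriv fun x => by
    have hsq : (fun s => ε i s * ε i s) = fun _ => c ^ 2 := funext fun s => by
      rw [← abs_mul_abs_self, hε, sq]
    rw [hsq, gibbsAvg_const, ← sq]

end Gibbs

lemma abs_freeEnergy_partialDerivs_le {κ c m : ℝ} (hκ : 0 ≤ κ) (hm : |m| ≤ c) :
    |κ * m| ≤ κ * c ∧ |κ * (c ^ 2 - m ^ 2)| ≤ κ * c ^ 2 ∧
      |κ * (-2 * m * (c ^ 2 - m ^ 2))| ≤ 2 * κ * c ^ 3 := by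
  have hv : 0 ≤ c ^ 2 - m ^ 2 := sub_nonneg.2 (sq_le_sq' (abs_le.1 hm).1 (abs_le.1 hm).2)
  have hv' : c ^ 2 - m ^ 2 ≤ c ^ 2 := sub_le_self _ (sq_nonneg _)
  refine ⟨?_, ?_, ?_⟩
  · rw [abs_mul, abs_of_nonneg hκ]
    exact mul_le_mul_of_nonneg_left hm hκ
  · rw [abs_of_nonneg (mul_nonneg hκ hv)]
    exact mul_le_mul_of_nonneg_left hv' hκ
  · rw [abs_mul, abs_mul, abs_mul, abs_of_nonneg hκ, abs_of_nonneg hv]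
    have hc : 0 ≤ c := (abs_nonneg _).trans hm
    calc κ * (|-2| * |m| * (c ^ 2 - m ^ 2)) ≤ κ * (2 * c * c ^ 2) := by
          gcongr; norm_num
      _ = 2 * κ * c ^ 3 := by ring

lemma abs_chain_second_le {g₁ g₂ f₁ f₂ B₁ B₂ a d : ℝ} (hg₁ : |g₁| ≤ B₁) (hg₂ : |g₂| ≤ B₂)
    (hf₁ : |f₁| ≤ a) (hf₂ : |f₂| ≤ d) : |g₂ * f₁ ^ 2 + g₁ * f₂| ≤ B₂ * a ^ 2 + B₁ * d := by
  refine (abs_add_le _ _).trans (add_le_add ?_ ?_) <;> rw [abs_mul]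
  · rw [abs_pow]
    exact mul_le_mul hg₂ (pow_le_pow_left₀ (abs_nonneg _) hf₁ 2) (by positivity)
      ((abs_nonneg _).trans hg₂)
  · exact mul_le_mul hg₁ hf₂ (abs_nonneg _) ((abs_nonneg _).trans hg₁)

lemma abs_chain_third_le {g₁ g₂ g₃ f₁ f₂ f₃ B₁ B₂ B₃ κ c : ℝ}
    (hg₁ : |g₁| ≤ B₁) (hg₂ : |g₂| ≤ B₂) (hg₃ : |g₃| ≤ B₃)
    (hf₁ : |f₁| ≤ κ * c) (hf₂ : |f₂| ≤ κ * c ^ 2) (hf₃ : |f₃| ≤ 2 * κ * c ^ 3)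
    (hκ : 0 ≤ κ) (hκ₁ : κ ≤ 1) (hc : 0 ≤ c) :
    |g₃ * f₁ ^ 3 + 3 * g₂ * f₁ * f₂ + g₁ * f₃| ≤ (2 * B₁ + 3 * B₂ + B₃) * κ * c ^ 3 := by
  have hB₂ : 0 ≤ B₂ := (abs_nonneg _).trans hg₂
  have hB₃ : 0 ≤ B₃ := (abs_nonneg _).trans hg₃
  have h₁ : |g₃ * f₁ ^ 3| ≤ B₃ * (κ * c) ^ 3 := by
    rw [abs_mul, abs_pow]; gcongr
  have h₂ : |3 * g₂ * f₁ * f₂| ≤ 3 * B₂ * (κ * c) * (κ * c ^ 2) := by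
    rw [abs_mul, abs_mul, abs_mul, abs_of_pos three_pos]; gcongr
  have h₃ : |g₁ * f₃| ≤ B₁ * (2 * κ * c ^ 3) := by
    rw [abs_mul]; exact mul_le_mul hg₁ hf₃ (abs_nonneg _) ((abs_nonneg _).trans hg₁)
  have hκ₂ : κ ^ 2 ≤ κ := by nlinarith
  have hκ₃ : κ ^ 3 ≤ κ := by nlinarith
  calc |g₃ * f₁ ^ 3 + 3 * g₂ * f₁ * f₂ + g₁ * f₃|
      ≤ B₃ * (κ * c) ^ 3 + 3 * B₂ * (κ * c) * (κ * c ^ 2) + B₁ * (2 * κ * c ^ 3) :=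
        (abs_add_three _ _ _).trans (add_le_add (add_le_add h₁ h₂) h₃)
    _ = (B₃ * κ ^ 3 + 3 * B₂ * κ ^ 2 + 2 * B₁ * κ) * c ^ 3 := by ring
    _ ≤ (2 * B₁ + 3 * B₂ + B₃) * κ * c ^ 3 := by
        gcongr
        nlinarith [mul_le_mul_of_nonneg_left hκ₃ hB₃, mul_le_mul_of_nonneg_left hκ₂ hB₂]

theorem abs_integral_comp_log_partitionFn_sub_le {S ι : Type*} [Fintype S] [Nonempty S]
    [Fintype ι] [DecidableEq ι] {b : S → ℝ} {ε : ι → S → ℝ} {c κ : ℝ} (hc : 0 ≤ c)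
    (hε : ∀ i s, |ε i s| = c) (hκ : 0 ≤ κ) (hκ₁ : κ ≤ 1)
    {g : ℝ → ℝ} (hg : ∀ p < 3, Differentiable ℝ (iteratedDeriv p g)) {B₁ B₂ B₃ : ℝ}
    (hB₁ : ∀ t, |deriv g t| ≤ B₁) (hB₂ : ∀ t, |iteratedDeriv 2 g t| ≤ B₂)
    (hB₃ : ∀ t, |iteratedDeriv 3 g t| ≤ B₃)
    {Ω : Type*} [MeasurableSpace Ω] {μ : Measure Ω} [IsProbabilityMeasure μ]
    {X Y : ι → Ω → ℝ} (hXm : ∀ i, Measurable (X i)) (hYm : ∀ i, Measurable (Y i))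
    (hind : iIndepFun (Sum.elim X Y) μ) (hX : ∀ i, MemLp (X i) 3 μ) (hY : ∀ i, MemLp (Y i) 3 μ)
    (hmean : ∀ i, ∫ ω, X i ω ∂μ = ∫ ω, Y i ω ∂μ)
    (hvar : ∀ i, ∫ ω, X i ω ^ 2 ∂μ = ∫ ω, Y i ω ^ 2 ∂μ) :
    |∫ ω, g (κ * Real.log (partitionFn b ε fun i => X i ω)) ∂μ -
        ∫ ω, g (κ * Real.log (partitionFn b ε fun i => Y i ω)) ∂μ| ≤
      (2 * B₁ + 3 * B₂ + B₃) * κ * c ^ 3 *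
        ∑ i, (∫ ω, |X i ω| ^ 3 ∂μ + ∫ ω, |Y i ω| ^ 3 ∂μ) := by
  have hg₀ : ∀ y, HasDerivAt g (deriv g y) y := by
    simpa using hasDerivAt_iteratedDeriv hg (p := 0) (by norm_num)
  have hg₁ : ∀ y, HasDerivAt (deriv g) (iteratedDeriv 2 g y) y := by
    simpa using hasDerivAt_iteratedDeriv hg (p := 1) (by norm_num)
  have hg₂ := hasDerivAt_iteratedDeriv hg (p := 2) (by norm_num)
  set m : ι → (ι → ℝ) → ℝ := fun i => gibbsAvg b ε (ε i)
  have hm : ∀ i, HasPartialDeriv i (m i) (fun x => c ^ 2 - m i x ^ 2) := fun i =>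
    hasPartialDeriv_gibbsAvg_self (hε i)
  have hF₁ : ∀ i, HasPartialDeriv i (fun x => κ * Real.log (partitionFn b ε x))
      (fun x => κ * m i x) := fun i => (hasPartialDeriv_log_partitionFn i).const_mul κ
  have hF₃ : ∀ i, HasPartialDeriv i (fun x => κ * (c ^ 2 - m i x ^ 2))
      (fun x => κ * (-2 * m i x * (c ^ 2 - m i x ^ 2))) := fun i =>
    ((hm i).comp (g := fun y => κ * (c ^ 2 - y ^ 2)) fun y => by
      simpa using ((hasDerivAt_pow 2 y).const_sub (c ^ 2)).const_mul κ).congr_deriv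
      fun x => by ring
  have hm_le : ∀ i x, |m i x| ≤ c := fun i x => abs_gibbsAvg_le (fun s => (hε i s).le) x
  have hbd := fun i x => abs_freeEnergy_partialDerivs_le hκ (hm_le i x)
  have hZm : Measurable (partitionFn b ε) := by
    unfold partitionFn gibbsWeight; fun_prop
  have hgm : Measurable g :=
    (continuous_iff_continuousAt.2 fun y => (hg₀ y).continuousAt).measurable
  refine abs_integral_sub_le_lindeberg (Φ := fun x => g (κ * Real.log (partitionFn b ε x)))
    (C₁ := B₁ * (κ * c)) (hgm.comp (measurable_const.mul hZm.log))
    (hD₁ := fun i => (hF₁ i).comp hg₀)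
    (hD₂ := fun i => (hF₁ i).comp_second hg₁ ((hm i).const_mul κ))
    (hD₃ := fun i => (hF₁ i).comp_third hg₁ hg₂ ((hm i).const_mul κ) (hF₃ i))
    (fun i x => ?_) (fun i x => abs_chain_second_le (hB₁ _) (hB₂ _) (hbd i x).1 (hbd i x).2.1)
    (fun i x => abs_chain_third_le (hB₁ _) (hB₂ _) (hB₃ _) (hbd i x).1 (hbd i x).2.1
      (hbd i x).2.2 hκ hκ₁ hc) hXm hYm hind hX hY hmean hvar
  rw [abs_mul]
  exact mul_le_mul (hB₁ _) (hbd i x).1 (abs_nonneg _) ((abs_nonneg _).trans (hB₁ 0))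

def spin (σ : Bool) : ℝ := if σ then 1 else -1

noncomputable def skCoupling (N : ℕ) (β : ℝ) (q : {q : Fin N × Fin N // q.1 < q.2})
    (s : Fin N → Bool) : ℝ :=
  β * (Real.sqrt N)⁻¹ * (spin (s q.1.1) * spin (s q.1.2))

noncomputable def skField (N : ℕ) (β h : ℝ) (s : Fin N → Bool) : ℝ := β * h * ∑ i, spin (s i)

lemma abs_skCoupling {N : ℕ} {β : ℝ} (hβ : 0 ≤ β) (q : {q : Fin N × Fin N // q.1 < q.2})
    (s : Fin N → Bool) : |skCoupling N β q s| = β * (Real.sqrt N)⁻¹ := by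
  have hspin : ∀ σ, |spin σ| = 1 := fun σ => by cases σ <;> simp [spin]
  rw [skCoupling, abs_mul, abs_mul (spin _), hspin, hspin, mul_one, mul_one,
    abs_of_nonneg (by positivity)]

lemma skFreeEnergy_eq_log_partitionFn (N : ℕ) (β h : ℝ) (y : Fin N × Fin N → ℝ) :
    skFreeEnergy N β h y =
      (N : ℝ)⁻¹ * Real.log (partitionFn (skField N β h) (skCoupling N β) fun q => y q.1) := by
  unfold skFreeEnergy partitionFn gibbsWeight skEnergy
  congr 3
  funext s
  rw [Finset.sum_subtype _ (p := fun q : Fin N × Fin N => q.1 < q.2) (fun q => by simp),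
    Finset.mul_sum, add_comm]
  simp only [skField, skCoupling, spin]
  congr 2
  exact Finset.sum_congr rfl fun q _ => by ring

lemma sum_third_moments_le {N : ℕ} {Ω : Type*} [MeasurableSpace Ω] {μ : Measure Ω}
    {J J' : Fin N × Fin N → Ω → ℝ} {γ : ℝ} (hγ : 0 ≤ γ)
    (hγJ : ∀ q : Fin N × Fin N, q.1 < q.2 → ∫ ω, |J q ω| ^ 3 ∂μ ≤ γ)
    (hγJ' : ∀ q : Fin N × Fin N, q.1 < q.2 → ∫ ω, |J' q ω| ^ 3 ∂μ ≤ γ) :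
    ∑ q : {q : Fin N × Fin N // q.1 < q.2}, (∫ ω, |J q.1 ω| ^ 3 ∂μ + ∫ ω, |J' q.1 ω| ^ 3 ∂μ) ≤
      (N : ℝ) ^ 2 * (2 * γ) := by
  refine (Finset.sum_le_card_nsmul _ _ (2 * γ) fun q _ => ?_).trans ?_
  · linarith [hγJ q.1 q.2, hγJ' q.1 q.2]
  · rw [nsmul_eq_mul, Finset.card_univ]
    gcongr
    exact_mod_cast (Fintype.card_subtype_le _).trans_eq (by simp [sq])

lemma sk_constant_le {N : ℕ} (hN : 0 < N) {β γ B₁ B₂ B₃ : ℝ} (hB₁ : 0 ≤ B₁) (hB₂ : 0 ≤ B₂)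
    (hB₃ : 0 ≤ B₃) (hβ : 0 ≤ β) (hγ : 0 ≤ γ) :
    (2 * B₁ + 3 * B₂ + B₃) * (N : ℝ)⁻¹ * (β * (Real.sqrt N)⁻¹) ^ 3 * ((N : ℝ) ^ 2 * (2 * γ)) ≤
      26 * (B₁ / 6 + B₂ / 2 + B₃ / 6) * β ^ 3 * γ * (Real.sqrt N)⁻¹ := by
  have hs : Real.sqrt N ^ 2 = N := Real.sq_sqrt (Nat.cast_nonneg N)
  have hs₀ : Real.sqrt N ≠ 0 := (Real.sqrt_pos.2 (by exact_mod_cast hN)).ne'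
  calc _ = 2 * (2 * B₁ + 3 * B₂ + B₃) * β ^ 3 * γ * (Real.sqrt N)⁻¹ := by
        generalize Real.sqrt N = r at hs hs₀
        rw [← hs]
        field_simp
    _ ≤ _ := by
        gcongr ?_ * _ * _ * _
        linarith

theorem stmt14
    {Ω : Type} [MeasurableSpace Ω] {μ : Measure Ω} [IsProbabilityMeasure μ]
    {N : ℕ} (hN : 2 ≤ N) (β h : ℝ) (hβ : 0 < β)
    (J J' : Fin N × Fin N → Ω → ℝ)
    (hJmeas : ∀ q : Fin N × Fin N, q.1 < q.2 → Measurable (J q))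
    (hJ'meas : ∀ q : Fin N × Fin N, q.1 < q.2 → Measurable (J' q))
    (hindep : iIndepFun
      (Sum.elim (fun q : {q : Fin N × Fin N // q.1 < q.2} => J q.1)
        (fun q : {q : Fin N × Fin N // q.1 < q.2} => J' q.1)) μ)
    (hJmean : ∀ q : Fin N × Fin N, q.1 < q.2 → ∫ ω, J q ω ∂μ = 0)
    (hJ'mean : ∀ q : Fin N × Fin N, q.1 < q.2 → ∫ ω, J' q ω ∂μ = 0)
    (hJvar : ∀ q : Fin N × Fin N, q.1 < q.2 → ∫ ω, (J q ω) ^ 2 ∂μ = 1)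
    (hJ'var : ∀ q : Fin N × Fin N, q.1 < q.2 → ∫ ω, (J' q ω) ^ 2 ∂μ = 1)
    (γ : ℝ)
    (hJ3 : ∀ q : Fin N × Fin N, q.1 < q.2 → MemLp (J q) 3 μ)
    (hJ'3 : ∀ q : Fin N × Fin N, q.1 < q.2 → MemLp (J' q) 3 μ)
    (hγJ : ∀ q : Fin N × Fin N, q.1 < q.2 → ∫ ω, |J q ω| ^ 3 ∂μ ≤ γ)
    (hγJ' : ∀ q : Fin N × Fin N, q.1 < q.2 → ∫ ω, |J' q ω| ^ 3 ∂μ ≤ γ)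
    (g : ℝ → ℝ) (hg : ∀ p < 3, Differentiable ℝ (iteratedDeriv p g))
    (B1 B2 B3 : ℝ)
    (hB1 : ∀ t, |deriv g t| ≤ B1)
    (hB2 : ∀ t, |iteratedDeriv 2 g t| ≤ B2)
    (hB3 : ∀ t, |iteratedDeriv 3 g t| ≤ B3) :
    |(∫ ω, g (skFreeEnergy N β h fun q => J q ω) ∂μ) -
        ∫ ω, g (skFreeEnergy N β h fun q => J' q ω) ∂μ| ≤
      26 * (B1 / 6 + B2 / 2 + B3 / 6) * β ^ 3 * γ * (Real.sqrt N)⁻¹ := by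
  have hγ : 0 ≤ γ := (integral_nonneg fun ω => by positivity).trans
    (hγJ (⟨0, by omega⟩, ⟨1, by omega⟩) (by simp [Fin.lt_def]))
  obtain ⟨hB₁, hB₂, hB₃⟩ : 0 ≤ B1 ∧ 0 ≤ B2 ∧ 0 ≤ B3 :=
    ⟨(abs_nonneg _).trans (hB1 0), (abs_nonneg _).trans (hB2 0), (abs_nonneg _).trans (hB3 0)⟩
  simp_rw [skFreeEnergy_eq_log_partitionFn]
  refine (abs_integral_comp_log_partitionFn_sub_le (X := fun q => J q.1) (Y := fun q => J' q.1)
    (by positivity) (abs_skCoupling hβ.le) (by positivity)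
    (inv_le_one_of_one_le₀ (by exact_mod_cast (by omega : 1 ≤ N))) hg hB1 hB2 hB3
    (fun q => hJmeas q.1 q.2) (fun q => hJ'meas q.1 q.2) hindep (fun q => hJ3 q.1 q.2)
    (fun q => hJ'3 q.1 q.2) (fun q => by rw [hJmean q.1 q.2, hJ'mean q.1 q.2])
    (fun q => by rw [hJvar q.1 q.2, hJ'var q.1 q.2])).trans ?_
  refine (mul_le_mul_of_nonneg_left (sum_third_moments_le hγ hγJ hγJ') ?_).trans
    (sk_constant_le (by omega) hB₁ hB₂ hB₃ hβ.le hγ)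
  positivity
end
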